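/- Let φ ∈ L²(𝕋,H²) be such that φ(λ) is an inner function for a.e. λ in the support E = {λ ∈ 𝕋 : φ(λ) ≠ 0} of φ. Then M = φ·L²(𝕋,H²) = {φg : g ∈ L²(𝕋,H²)} is a closed subspace of L²(𝕋,H²) reducing for the bilateral shift U, and its associated measurable range function satisfies J_M(λ) = φ(λ)·H² = {φ(λ)h : h ∈ H²} for a.e. λ ∈ 𝕋, where (φ(λ)h)(z) = φ(λ)(z)·h(z). -/

import Mathlib

noncomputable section

open MeasureTheory Complex Submodule
open scoped InnerProductSpace ENNReal ComplexConjugate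

set_option synthInstance.maxHeartbeats 1000000
set_option maxHeartbeats 1600000

namespace ShiftPaper

instance : Fact ((0:ℝ) < 1) := ⟨one_pos⟩

/-- The circle, modelled as `ℝ/ℤ`. -/
abbrev 𝕋 : Type := UnitAddCircle

/-- The normalized Haar (Lebesgue) probability measure on the circle. -/
abbrev μT : Measure 𝕋 := AddCircle.haarAddCircle

/-- The space `L²(𝕋, E)` of square-integrable `E`-valued functions on the circle. -/
abbrev L2 (E : Type*) [NormedAddCommGroup E] := Lp E 2 μT

lemma norm_fourier (n : ℤ) (t : 𝕋) : ‖fourier n t‖ = 1 := by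
  rw [fourier_apply, Circle.norm_coe]

section mulF

variable {E : Type*} [NormedAddCommGroup E] [NormedSpace ℂ E]

lemma memLp_mulF (n : ℤ) (f : L2 E) :
    MemLp (fun t => fourier n t • (f : 𝕋 → E) t) 2 μT := by
  refine MemLp.of_le (Lp.memLp f)
    (((fourier n).continuous.aestronglyMeasurable).smul (Lp.aestronglyMeasurable f)) ?_
  refine Filter.Eventually.of_forall fun t => ?_
  rw [norm_smul, norm_fourier, one_mul]

/-- Multiplication by `fourier n` (i.e. by `λ ↦ λⁿ`) as a bounded operator on `L²(𝕋, E)`.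
For `n = 1` this is the bilateral shift `U`; for general `n : ℤ` it is `Uⁿ`. -/
def mulF (n : ℤ) : L2 E →L[ℂ] L2 E :=
  LinearMap.mkContinuous
    { toFun := fun f => (memLp_mulF n f).toLp _
      map_add' := fun f g => by
        rw [← MemLp.toLp_add (memLp_mulF n f) (memLp_mulF n g)]
        refine MemLp.toLp_congr _ _ ?_
        filter_upwards [Lp.coeFn_add f g] with t ht
        simp only [ht, Pi.add_apply, smul_add]
      map_smul' := fun c f => by
        simp only [RingHom.id_apply]
        rw [← MemLp.toLp_const_smul c (memLp_mulF n f)]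
        refine MemLp.toLp_congr _ _ ?_
        filter_upwards [Lp.coeFn_smul c f] with t ht
        rw [ht]
        simp only [Pi.smul_apply]
        rw [smul_comm] }
    1
    (fun f => by
      simp only [LinearMap.coe_mk, AddHom.coe_mk, one_mul]
      rw [Lp.norm_toLp _ (memLp_mulF n f), Lp.norm_def]
      refine le_of_eq (congrArg ENNReal.toReal ?_)
      refine eLpNorm_congr_norm_ae ?_
      refine Filter.Eventually.of_forall fun t => ?_
      rw [norm_smul, norm_fourier, one_mul])

lemma coeFn_mulF (n : ℤ) (f : L2 E) :
    (mulF n f : 𝕋 → E) =ᵐ[μT] fun t => fourier n t • (f : 𝕋 → E) t :=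
  MemLp.coeFn_toLp (memLp_mulF n f)

end mulF

section HardySpace

variable (K : Type) [NormedAddCommGroup K] [InnerProductSpace ℂ K] [CompleteSpace K]

/-- The continuous function `t ↦ fourier n t • x`. -/
def fourierSmulCM (n : ℤ) (x : K) : C(𝕋, K) :=
  ⟨fun t => fourier n t • x, (fourier n).continuous.smul continuous_const⟩

/-- The element of `L²(𝕋, K)` given by `t ↦ fourier n t • x`. -/
def expVec (n : ℤ) (x : K) : L2 K := ContinuousMap.toLp 2 μT ℂ (fourierSmulCM K n x)

lemma coeFn_expVec (n : ℤ) (x : K) :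
    (expVec K n x : 𝕋 → K) =ᵐ[μT] fun t => fourier n t • x :=
  ContinuousMap.coeFn_toLp (𝕜 := ℂ) μT (fourierSmulCM K n x)

/-- The Hardy space `H²(𝕋, K)`, as the subspace of `L²(𝕋, K)` of functions all of whose
weak Fourier coefficients of negative index vanish (equivalently, all of whose coordinate
functions with respect to an orthonormal basis of `K` lie in the scalar Hardy space `H²`). -/
def Hardy : Submodule ℂ (L2 K) :=
  ⨅ (n : ℤ) (_ : n < 0) (x : K), LinearMap.ker (innerSL ℂ (expVec K n x) : L2 K →ₗ[ℂ] ℂ)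

lemma isClosed_Hardy : IsClosed ((Hardy K : Set (L2 K))) := by
  have h : (Hardy K : Set (L2 K)) = ⋂ (n : ℤ) (_ : n < 0) (x : K),
      (LinearMap.ker (innerSL ℂ (expVec K n x) : L2 K →ₗ[ℂ] ℂ) : Set (L2 K)) := by
    simp only [Hardy, Submodule.coe_iInf]
  rw [h]
  exact isClosed_iInter fun n => isClosed_iInter fun _ => isClosed_iInter fun x =>
    (ContinuousLinearMap.isClosed_ker _)

/-- The Hardy space `H²(𝕋, K)` as a Hilbert space in its own right. -/
abbrev H2 := ↥(Hardy K)

instance : CompleteSpace (H2 K) := (isClosed_Hardy K).completeSpace_coe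

end HardySpace


section Shift

variable (K : Type) [NormedAddCommGroup K] [InnerProductSpace ℂ K] [CompleteSpace K]

lemma inner_expVec_mulF (n : ℤ) (x : K) (f : L2 K) :
    (inner ℂ (expVec K n x) (mulF 1 f) : ℂ) = inner ℂ (expVec K (n - 1) x) f := by
  rw [MeasureTheory.L2.inner_def, MeasureTheory.L2.inner_def]
  refine integral_congr_ae ?_
  filter_upwards [coeFn_mulF 1 f, coeFn_expVec K n x, coeFn_expVec K (n-1) x] with t h1 h2 h3
  rw [h1, h2, h3, inner_smul_left, inner_smul_left, inner_smul_right,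
    ← fourier_neg, ← fourier_neg, ← mul_assoc, ← fourier_add]
  have h : -n + 1 = -(n - 1) := by ring
  rw [h]

lemma mulF_mem_hardy {f : L2 K} (hf : f ∈ Hardy K) : mulF 1 f ∈ Hardy K := by
  simp only [Hardy, Submodule.mem_iInf, LinearMap.mem_ker, ContinuousLinearMap.coe_coe, innerSL_apply_apply] at hf ⊢
  intro n hn x
  rw [inner_expVec_mulF]
  exact hf (n - 1) (by omega) x

/-- The unilateral shift `S` on the Hardy space `H²(𝕋, K)`: the restriction of the
bilateral shift (multiplication by the variable) to the Hardy space. -/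
def S : H2 K →L[ℂ] H2 K where
  toLinearMap := (mulF (E := K) 1).toLinearMap.restrict
    (p := Hardy K) (q := Hardy K) (fun _ hx => mulF_mem_hardy K hx)
  cont := by
    apply Continuous.subtype_mk
    exact (mulF (E := K) 1).continuous.comp continuous_subtype_val

/-- The operator `Ŝ` on `L²(𝕋, H²(𝕋,K))`, acting pointwisely (on the values) as the
unilateral shift `S`. -/
def Shat : L2 (H2 K) →L[ℂ] L2 (H2 K) := (S K).compLpL 2 μT

lemma integral_fourier_eq_zero {m : ℤ} (hm : m ≠ 0) :
    ∫ t : 𝕋, fourier m t ∂μT = 0 := by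
  have h0 : ((0:ℤ)) ≠ m := fun h => hm h.symm
  have h : (inner ℂ (fourierLp (T := 1) 2 (0:ℤ)) (fourierLp 2 m) : ℂ) = 0 :=
    orthonormal_fourier.2 h0
  rw [MeasureTheory.L2.inner_def] at h
  rw [← h]
  refine integral_congr_ae ?_
  filter_upwards [coeFn_fourierLp 2 (0:ℤ), coeFn_fourierLp 2 m] with t h1 h2
  rw [h1, h2]
  simp [fourier_zero]

lemma const_mem_hardy (x : K) : expVec K 0 x ∈ Hardy K := by
  simp only [Hardy, Submodule.mem_iInf, LinearMap.mem_ker, ContinuousLinearMap.coe_coe, innerSL_apply_apply]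
  intro n hn y
  rw [MeasureTheory.L2.inner_def]
  have h : ∀ᵐ t ∂μT, (inner ℂ ((expVec K n y : 𝕋 → K) t) ((expVec K 0 x : 𝕋 → K) t) : ℂ)
      = fourier (-n) t * (inner ℂ y x : ℂ) := by
    filter_upwards [coeFn_expVec K n y, coeFn_expVec K 0 x] with t h1 h2
    rw [h1, h2, inner_smul_left, inner_smul_right, ← fourier_neg, fourier_zero, one_mul]
  rw [integral_congr_ae h, integral_mul_const,
    integral_fourier_eq_zero (by omega), zero_mul]

/-- The linear embedding of `K` into `H²(𝕋,K)` as constant functions. -/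
def constL : K →ₗ[ℂ] H2 K where
  toFun x := ⟨expVec K 0 x, const_mem_hardy K x⟩
  map_add' x y := by
    apply Subtype.ext
    simp only [Submodule.coe_add]
    unfold expVec
    rw [← map_add]
    congr 1
    ext t
    simp [fourierSmulCM, smul_add]
  map_smul' c x := by
    apply Subtype.ext
    simp only [RingHom.id_apply, SetLike.val_smul]
    unfold expVec
    rw [← _root_.map_smul]
    congr 1
    ext t
    simp [fourierSmulCM]

end Shift


section RangeFunctions

variable {F : Type*} [NormedAddCommGroup F] [InnerProductSpace ℂ F] [CompleteSpace F]

/-- The orthogonal projection onto a closed subspace, as a plain function (defined to be `0`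
if the subspace is not closed). -/
def projTo (N : Submodule ℂ F) (x : F) : F :=
  letI := Classical.dec (IsClosed ((N : Set F)))
  if h : IsClosed ((N : Set F)) then
    haveI : CompleteSpace N := h.completeSpace_coe
    (orthogonalProjection N x : F)
  else 0

/-- A measurable range function in `F`: a map `J` from `𝕋` to closed subspaces of `F` such
that `t ↦ ⟪P_{J(t)} x, y⟫` is measurable for every `x, y ∈ F`. -/
def IsMeasRange (J : 𝕋 → Submodule ℂ F) : Prop :=
  (∀ t, IsClosed ((J t : Set F))) ∧
  ∀ x y : F, Measurable fun t => (inner ℂ (projTo (J t) x) y : ℂ)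

/-- The set of `f ∈ L²(𝕋, E)` such that `f(t) ∈ J(t)` for a.e. `t ∈ 𝕋`. -/
def rangeSet {E : Type*} [NormedAddCommGroup E] [NormedSpace ℂ E]
    (J : 𝕋 → Submodule ℂ E) : Set (L2 E) :=
  {f | ∀ᵐ t ∂μT, (f : 𝕋 → E) t ∈ J t}

end RangeFunctions

section OperatorNotions

variable {E : Type*} [NormedAddCommGroup E] [NormedSpace ℂ E]

/-- A subspace `M` is invariant under the bounded operator `A` if `A(M) ⊆ M`. -/
def InvariantUnder (A : E →L[ℂ] E) (M : Submodule ℂ E) : Prop :=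
  ∀ f ∈ M, A f ∈ M

/-- Two bounded operators commute. -/
def CommutesWith (A B : E →L[ℂ] E) : Prop := ∀ f, A (B f) = B (A f)

variable {F : Type*} [NormedAddCommGroup F] [InnerProductSpace ℂ F]

/-- A subspace `M` is reducing for `A` if both `M` and `M^⊥` are invariant under `A`. -/
def Reducing (A : F →L[ℂ] F) (M : Submodule ℂ F) : Prop :=
  InvariantUnder A M ∧ InvariantUnder A Mᗮ

/-- `Φ` is a partial isometry with initial space `W`: it is isometric on `W` and vanishes
on `W^⊥`. -/
def IsPartialIsometryOn (Φ : F →L[ℂ] F) (W : Submodule ℂ F) : Prop :=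
  (∀ f ∈ W, ‖Φ f‖ = ‖f‖) ∧ ∀ f ∈ Wᗮ, Φ f = 0

end OperatorNotions

section FullHardy

variable (K : Type) [NormedAddCommGroup K] [InnerProductSpace ℂ K] [CompleteSpace K]

/-- For a subspace `N ⊆ K`, the subspace `H²_N` of `H²_K`: those elements of the Hardy space
taking values in `N` almost everywhere. -/
def hardyIn (N : Submodule ℂ K) : Submodule ℂ (H2 K) where
  carrier := {g | ∀ᵐ z ∂μT, ((g : L2 K) : 𝕋 → K) z ∈ N}
  zero_mem' := by
    have h0 : ((0 : H2 K) : L2 K) = 0 := rfl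
    rw [Set.mem_setOf_eq, h0]
    filter_upwards [Lp.coeFn_zero K 2 μT] with z hz
    rw [hz]
    exact N.zero_mem
  add_mem' := by
    intro a b ha hb
    have h0 : ((a + b : H2 K) : L2 K) = (a : L2 K) + (b : L2 K) := rfl
    rw [Set.mem_setOf_eq, h0]
    filter_upwards [ha, hb, Lp.coeFn_add (a : L2 K) (b : L2 K)] with z ha' hb' hadd
    rw [hadd]
    exact N.add_mem ha' hb'
  smul_mem' := by
    intro c a ha
    have h0 : ((c • a : H2 K) : L2 K) = c • (a : L2 K) := rfl
    rw [Set.mem_setOf_eq, h0]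
    filter_upwards [ha, Lp.coeFn_smul c (a : L2 K)] with z ha' hsmul
    rw [hsmul]
    exact N.smul_mem c ha'

/-- The set of `f ∈ L²(𝕋, H²_K)` with `f(t) ∈ H²_{J(t)}` for a.e. `t`. If `J` is a measurable
range function in `K`, this is the full-Hardy subspace with base `J`. -/
def fullHardySet (J : 𝕋 → Submodule ℂ K) : Set (L2 (H2 K)) :=
  {f | ∀ᵐ t ∂μT, (f : 𝕋 → H2 K) t ∈ hardyIn K (J t)}

/-- A subspace `W ⊆ L²(𝕋, H²_K)` is full-Hardy if it is of the form
`{f : f(t) ∈ H²_{J(t)} a.e.}` for some measurable range function `J` in `K`. -/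
def IsFullHardy (W : Submodule ℂ (L2 (H2 K))) : Prop :=
  ∃ J : 𝕋 → Submodule ℂ K, IsMeasRange J ∧ (W : Set (L2 (H2 K))) = fullHardySet K J

end FullHardy

section Dimension

open scoped Classical in
/-- The Hilbert-space dimension of a subspace, as an element of `ℕ∞` (in a separable ambient
space this is the cardinality of any orthonormal basis). -/
def dimSub {F : Type*} [NormedAddCommGroup F] [InnerProductSpace ℂ F]
    (N : Submodule ℂ F) : ℕ∞ :=
  if FiniteDimensional ℂ ↥N then (Module.finrank ℂ ↥N : ℕ∞) else ⊤

end Dimension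

section ScalarCase

/-- Evaluation of an element of the scalar Hardy space (via its chosen representative). -/
def ev (g : H2 ℂ) (z : 𝕋) : ℂ := ((g : L2 ℂ) : 𝕋 → ℂ) z

/-- Iterated evaluation of an element of `L²(𝕋, H²)`. -/
def ev2 (f : L2 (H2 ℂ)) (t z : 𝕋) : ℂ := ev ((f : 𝕋 → H2 ℂ) t) z

/-- A function `h ∈ H²` is inner if `|h(z)| = 1` for a.e. `z ∈ 𝕋`. -/
def IsInnerFn (g : H2 ℂ) : Prop := ∀ᵐ z ∂μT, ‖ev g z‖ = 1

lemma ev_zero : ∀ᵐ z ∂μT, ev (0 : H2 ℂ) z = 0 := by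
  have h0 : ((0 : H2 ℂ) : L2 ℂ) = 0 := rfl
  unfold ev
  rw [h0]
  filter_upwards [Lp.coeFn_zero ℂ 2 μT] with z hz
  rw [hz]
  rfl

lemma ev_add (u v : H2 ℂ) : ∀ᵐ z ∂μT, ev (u + v) z = ev u z + ev v z := by
  have h0 : ((u + v : H2 ℂ) : L2 ℂ) = (u : L2 ℂ) + (v : L2 ℂ) := rfl
  unfold ev
  rw [h0]
  filter_upwards [Lp.coeFn_add (u : L2 ℂ) (v : L2 ℂ)] with z hz
  rw [hz]
  rfl

lemma ev_smul (c : ℂ) (u : H2 ℂ) : ∀ᵐ z ∂μT, ev (c • u) z = c * ev u z := by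
  have h0 : ((c • u : H2 ℂ) : L2 ℂ) = c • (u : L2 ℂ) := rfl
  unfold ev
  rw [h0]
  filter_upwards [Lp.coeFn_smul c (u : L2 ℂ)] with z hz
  rw [hz]
  rfl

/-- For `w ∈ H²`, the subspace `w·H² = {w·k : k ∈ H²}` of `H²` (membership described via
a.e. pointwise multiplication of representatives). -/
def mulSet (w : H2 ℂ) : Submodule ℂ (H2 ℂ) where
  carrier := {u | ∃ k : H2 ℂ, ∀ᵐ z ∂μT, ev u z = ev w z * ev k z}
  zero_mem' := by
    refine ⟨0, ?_⟩
    filter_upwards [ev_zero] with z hz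
    rw [hz, mul_zero]
  add_mem' := by
    rintro u v ⟨k₁, h₁⟩ ⟨k₂, h₂⟩
    refine ⟨k₁ + k₂, ?_⟩
    filter_upwards [h₁, h₂, ev_add u v, ev_add k₁ k₂] with z e1 e2 e3 e4
    rw [e3, e1, e2, e4, mul_add]
  smul_mem' := by
    rintro c u ⟨k, h⟩
    refine ⟨c • k, ?_⟩
    filter_upwards [h, ev_smul c u, ev_smul c k] with z e1 e2 e3
    rw [e2, e1, e3]
    ring

/-- The set `φ·L²(𝕋, H²) = {φ g : g ∈ L²(𝕋,H²)}`, where `(φ g)(t)(z) = φ(t)(z)·g(t)(z)`. -/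
def timesSet (φ : L2 (H2 ℂ)) : Set (L2 (H2 ℂ)) :=
  {h | ∃ g : L2 (H2 ℂ), ∀ᵐ t ∂μT, ∀ᵐ z ∂μT, ev2 h t z = ev2 φ t z * ev2 g t z}

end ScalarCase

/-! For `w` inner or zero, multiplication by `w` is a partial isometry `A_w` of `H²` (an isometry,
resp. `0`) whose range is `w·H²`; hence `w·H²` is closed and its orthogonal projection is
`A_w A_w†`. Replace `φ` by a strongly measurable representative `ψ` all of whose values are inner
or zero, and put `J(λ) = ψ(λ)·H²`. In the basis `eₘ = zᵐ` of `H²` the coordinates of `A_λ† x` are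
`⟪Sᵐ ψ(λ), x⟫`, continuous in `ψ(λ)`; so `λ ↦ A_λ† x` is measurable, which makes `J` a measurable
range function (`⟪P_{J(λ)} x, y⟫ = ⟪A_λ† x, A_λ† y⟫`) and turns every `h` with `h(λ) ∈ J(λ)` into
`h = φ g` with `g(λ) = A_λ† h(λ)` square integrable. Thus `φ·L²(𝕋,H²)` is the range subspace of
`J`, which is closed and invariant under multiplication by `λ` and `λ⁻¹`, hence reducing. -/

open scoped InnerProduct

theorem _root_.MeasureTheory.AEStronglyMeasurable.exists_stronglyMeasurable_forall
    {α β : Type*} [MeasurableSpace α] {μ : Measure α} [TopologicalSpace β] [Zero β]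
    {f : α → β} {p : β → Prop} (hf : AEStronglyMeasurable f μ) (h0 : p 0)
    (hp : ∀ᵐ t ∂μ, p (f t)) :
    ∃ g : α → β, StronglyMeasurable g ∧ f =ᵐ[μ] g ∧ ∀ t, p (g t) := by
  classical
  set N := toMeasurable μ {t | ¬ p (hf.mk f t)}
  have hN : ∀ᵐ t ∂μ, t ∉ N := by
    refine measure_eq_zero_iff_ae_notMem.mp ?_
    rw [measure_toMeasurable, ← ae_iff]
    filter_upwards [hp, hf.ae_eq_mk] with t ht hft
    rwa [← hft]
  refine ⟨N.piecewise 0 (hf.mk f), StronglyMeasurable.piecewise (measurableSet_toMeasurable μ _)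
    stronglyMeasurable_const hf.stronglyMeasurable_mk, ?_, fun t => ?_⟩
  · filter_upwards [hf.ae_eq_mk, hN] with t ht htN
    rw [Set.piecewise_eq_of_notMem _ _ _ htN, ht]
  · by_cases ht : t ∈ N
    · rw [Set.piecewise_eq_of_mem _ _ _ ht]; exact h0
    · rw [Set.piecewise_eq_of_notMem _ _ _ ht]
      exact not_not.mp fun h => ht (subset_toMeasurable μ _ h)

theorem _root_.HilbertBasis.stronglyMeasurable_of_measurable_inner {α 𝕜 E : Type*}
    [MeasurableSpace α] [RCLike 𝕜] [NormedAddCommGroup E] [InnerProductSpace 𝕜 E]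
    (b : HilbertBasis ℕ 𝕜 E) {f : α → E} (hf : ∀ i, Measurable fun t => ⟪b i, f t⟫_𝕜) :
    StronglyMeasurable f := by
  refine stronglyMeasurable_of_tendsto Filter.atTop
    (f := fun n t => ∑ i ∈ Finset.range n, ⟪b i, f t⟫_𝕜 • b i) (fun n => ?_)
    (tendsto_pi_nhds.mpr fun t => ?_)
  · exact Finset.stronglyMeasurable_fun_sum _ fun i _ =>
      (hf i).stronglyMeasurable.smul_const (b i)
  · simpa only [b.repr_apply_apply] using (b.hasSum_repr (f t)).tendsto_sum_nat

section PartialIsometry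

variable {E F : Type*} [NormedAddCommGroup E] [InnerProductSpace ℂ E] [CompleteSpace E]
  [NormedAddCommGroup F] [InnerProductSpace ℂ F] [CompleteSpace F]
  {A : E →L[ℂ] F}

open ContinuousLinearMap

lemma apply_adjoint_apply_of_mem_range (hA : A ∘L A† ∘L A = A) {y : F}
    (hy : y ∈ A.range) : A ((A†) y) = y := by
  obtain ⟨x, rfl⟩ := hy
  exact DFunLike.congr_fun hA x

lemma isClosed_range_of_comp_adjoint_comp (hA : A ∘L A† ∘L A = A) :
    IsClosed (A.range : Set F) := by
  have : (A.range : Set F) = ((1 : F →L[ℂ] F) - A ∘L A†).ker := by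
    ext y
    refine ⟨fun hy => ?_, fun hy => ⟨(A†) y, ?_⟩⟩
    · simp [apply_adjoint_apply_of_mem_range hA hy]
    · have : y - A ((A†) y) = 0 := by simpa using hy
      exact (sub_eq_zero.mp this).symm
  rw [this]
  exact isClosed_ker _

lemma projTo_range_of_comp_adjoint_comp (hA : A ∘L A† ∘L A = A) (x : F) :
    projTo A.range x = A ((A†) x) := by
  have hcl := isClosed_range_of_comp_adjoint_comp hA
  have : CompleteSpace A.range := hcl.completeSpace_coe
  have hA' : (A†) (A ((A†) x)) = (A†) x := by
    simpa [adjoint_comp, comp_assoc] using DFunLike.congr_fun (congrArg adjoint hA) x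
  rw [projTo, dif_pos hcl, ← starProjection_apply]
  refine eq_starProjection_of_mem_of_inner_eq_zero (A.mem_range_self _) ?_
  rintro _ ⟨y, rfl⟩
  change ⟪_, A y⟫_ℂ = 0
  rw [← adjoint_inner_left, map_sub, hA', sub_self, inner_zero_left]

end PartialIsometry

section RangeSubmodule

variable {E : Type*} [NormedAddCommGroup E] [InnerProductSpace ℂ E]

def rangeSubmodule (J : 𝕋 → Submodule ℂ E) : Submodule ℂ (L2 E) where
  carrier := rangeSet J
  zero_mem' := by
    filter_upwards [Lp.coeFn_zero E 2 μT] with t ht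
    rw [ht]
    exact (J t).zero_mem
  add_mem' {f g} hf hg := by
    filter_upwards [hf, hg, Lp.coeFn_add f g] with t hft hgt hfg
    rw [hfg]
    exact (J t).add_mem hft hgt
  smul_mem' c f hf := by
    filter_upwards [hf, Lp.coeFn_smul c f] with t hft hcf
    rw [hcf]
    exact (J t).smul_mem c hft

lemma isClosed_rangeSet {J : 𝕋 → Submodule ℂ E} (hJ : ∀ t, IsClosed (J t : Set E)) :
    IsClosed (rangeSet J) := by
  refine IsSeqClosed.isClosed fun f g hf hfg => ?_
  have hmeas : TendstoInMeasure μT (fun n => (f n : 𝕋 → E)) Filter.atTop g :=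
    tendstoInMeasure_of_tendsto_eLpNorm two_ne_zero
      (fun n => Lp.aestronglyMeasurable (f n)) (Lp.aestronglyMeasurable g)
      ((Lp.tendsto_Lp_iff_tendsto_eLpNorm' f g).mp hfg)
  obtain ⟨ns, -, hns⟩ := hmeas.exists_seq_tendsto_ae
  filter_upwards [hns, ae_all_iff.mpr fun i => hf (ns i)] with t hlim hmem
  exact (hJ t).mem_of_tendsto hlim (Filter.Eventually.of_forall hmem)

lemma mulF_mem_rangeSet (J : 𝕋 → Submodule ℂ E) (m : ℤ) {f : L2 E} (hf : f ∈ rangeSet J) :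
    mulF m f ∈ rangeSet J := by
  filter_upwards [hf, coeFn_mulF m f] with t hft hmt
  rw [hmt]
  exact (J t).smul_mem _ hft

lemma inner_mulF_left (m : ℤ) (f g : L2 E) :
    ⟪mulF m f, g⟫_ℂ = ⟪f, mulF (-m) g⟫_ℂ := by
  rw [L2.inner_def, L2.inner_def]
  refine integral_congr_ae ?_
  filter_upwards [coeFn_mulF m f, coeFn_mulF (-m) g] with t hf hg
  rw [hf, hg, inner_smul_left, inner_smul_right, ← fourier_neg]

lemma reducing_rangeSubmodule (J : 𝕋 → Submodule ℂ E) :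
    Reducing (mulF 1) (rangeSubmodule J) := by
  refine ⟨fun f hf => mulF_mem_rangeSet J 1 hf, fun f hf => ?_⟩
  rw [Submodule.mem_orthogonal] at hf ⊢
  intro u hu
  rw [← neg_neg (1 : ℤ), ← inner_mulF_left]
  exact hf _ (mulF_mem_rangeSet J (-1) hu)

end RangeSubmodule

section ScalarHardy

lemma H2_ext {u v : H2 ℂ} (h : ev u =ᵐ[μT] ev v) : u = v :=
  Subtype.ext (Lp.ext h)

lemma ev_S_pow (m : ℕ) (w : H2 ℂ) :
    ev ((S ℂ ^ m) w) =ᵐ[μT] fun z => fourier m z * ev w z := by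
  induction m with
  | zero => exact Filter.Eventually.of_forall fun z => by simp [ev]
  | succ m ih =>
    rw [pow_succ']
    filter_upwards [coeFn_mulF (E := ℂ) 1 ((S ℂ ^ m) w : L2 ℂ), ih] with z hS hm
    change ((mulF 1 ((S ℂ ^ m) w : L2 ℂ) : L2 ℂ) : 𝕋 → ℂ) z = _
    rw [hS, smul_eq_mul]
    change fourier 1 z * ev ((S ℂ ^ m) w) z = _
    rw [hm, ← mul_assoc, ← fourier_add]
    push_cast
    ring_nf

lemma expVec_eq_smul_fourierLp (n : ℤ) (x : ℂ) : expVec ℂ n x = x • fourierLp 2 n := by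
  refine Lp.ext ?_
  filter_upwards [coeFn_expVec ℂ n x, Lp.coeFn_smul x (fourierLp 2 n), coeFn_fourierLp 2 n]
    with z he hs hf
  rw [he, hs, Pi.smul_apply, hf, smul_eq_mul, smul_eq_mul, mul_comm]

lemma mem_Hardy_iff_inner_fourierLp {v : L2 ℂ} :
    v ∈ Hardy ℂ ↔ ∀ n < (0 : ℤ), ⟪fourierLp 2 n, v⟫_ℂ = 0 := by
  simp only [Hardy, Submodule.mem_iInf, LinearMap.mem_ker, ContinuousLinearMap.coe_coe,
    innerSL_apply_apply, expVec_eq_smul_fourierLp, inner_smul_left, mul_eq_zero,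
    map_eq_zero]
  exact ⟨fun h n hn => (h n hn 1).resolve_left one_ne_zero, fun h n hn x => Or.inr (h n hn)⟩

def hardyMonomial (m : ℕ) : H2 ℂ :=
  ⟨fourierLp 2 m, mem_Hardy_iff_inner_fourierLp.mpr fun n hn => orthonormal_fourier.2 (by omega)⟩

lemma orthonormal_hardyMonomial : Orthonormal ℂ hardyMonomial :=
  ((orthonormal_fourier (T := 1)).comp _ Nat.cast_injective :)

lemma orthogonal_span_hardyMonomial_eq_bot : (span ℂ (Set.range hardyMonomial))ᗮ = ⊥ := by
  refine (Submodule.eq_bot_iff _).mpr fun u hu => ?_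
  have hcoef : ∀ n : ℤ, ⟪fourierBasis (T := 1) n, (u : L2 ℂ)⟫_ℂ = 0 := by
    intro n
    rw [coe_fourierBasis]
    rcases lt_or_ge n 0 with hn | hn
    · exact mem_Hardy_iff_inner_fourierLp.mp u.2 n hn
    · lift n to ℕ using hn
      exact (Submodule.inner_right_of_mem_orthogonal (subset_span (Set.mem_range_self n)) hu :
        ⟪hardyMonomial n, u⟫_ℂ = 0)
  have : (fourierBasis (T := 1)).repr (u : L2 ℂ) = 0 := by
    ext n
    simpa [fourierBasis.repr_apply_apply] using hcoef n
  exact Subtype.ext (by simpa using this)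

def hardyBasis : HilbertBasis ℕ ℂ (H2 ℂ) :=
  HilbertBasis.mkOfOrthogonalEqBot orthonormal_hardyMonomial orthogonal_span_hardyMonomial_eq_bot

lemma hardyBasis_apply (m : ℕ) : hardyBasis m = hardyMonomial m :=
  congrFun (HilbertBasis.coe_mkOfOrthogonalEqBot _ _) m

end ScalarHardy

section MulL2

variable {α : Type*} [MeasurableSpace α] {μ : Measure α} {a : α → ℂ}

def mulL2 (ha : MemLp a ∞ μ) : Lp ℂ 2 μ →L[ℂ] Lp ℂ 2 μ :=
  (ContinuousLinearMap.mul ℂ ℂ).holderL μ ∞ 2 2 (ha.toLp a)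

lemma coeFn_mulL2 (ha : MemLp a ∞ μ) (u : Lp ℂ 2 μ) : mulL2 ha u =ᵐ[μ] fun x => a x * u x := by
  filter_upwards [ContinuousLinearMap.coeFn_holder (r := 2) (ContinuousLinearMap.mul ℂ ℂ)
    (ha.toLp a) u, ha.coeFn_toLp] with x hx ha'
  rw [← ha']
  exact hx

lemma norm_mulL2_apply_le (ha : MemLp a ∞ μ) (ha1 : ∀ᵐ x ∂μ, ‖a x‖ ≤ 1) (u : Lp ℂ 2 μ) :
    ‖mulL2 ha u‖ ≤ ‖u‖ := by
  refine (Lp.norm_le_mul_norm_of_ae_le_mul (c := 1) (f := mulL2 ha u) (g := u) ?_).trans_eq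
    (one_mul _)
  filter_upwards [coeFn_mulL2 ha u, ha1] with x hx hax
  rw [hx, norm_mul]
  gcongr

lemma norm_mulL2_apply (ha : MemLp a ∞ μ) (ha1 : ∀ᵐ x ∂μ, ‖a x‖ = 1) (u : Lp ℂ 2 μ) :
    ‖mulL2 ha u‖ = ‖u‖ := by
  rw [Lp.norm_def, Lp.norm_def]
  congr 1
  refine eLpNorm_congr_norm_ae ?_
  filter_upwards [coeFn_mulL2 ha u, ha1] with x hx hax
  rw [hx, norm_mul, hax, one_mul]

end MulL2

section Multiplier

lemma memLp_top_ev {w : H2 ℂ} (hw : ∀ᵐ z ∂μT, ‖ev w z‖ ≤ 1) : MemLp (ev w) ∞ μT :=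
  memLp_top_of_bound (Lp.aestronglyMeasurable _) 1 hw

variable {w : H2 ℂ} (hw : ∀ᵐ z ∂μT, ‖ev w z‖ ≤ 1)

lemma mulL2_hardyMonomial (m : ℕ) :
    mulL2 (memLp_top_ev hw) (hardyMonomial m) = ((S ℂ ^ m) w : L2 ℂ) := by
  refine Lp.ext ?_
  filter_upwards [coeFn_mulL2 (memLp_top_ev hw) (hardyMonomial m : L2 ℂ), ev_S_pow m w,
    coeFn_fourierLp 2 (m : ℤ)] with z hmul hS hmono
  change _ = ev _ z
  rw [hmul, hS, mul_comm]
  exact congrArg (· * ev w z) hmono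

lemma mulL2_mem_Hardy (u : H2 ℂ) : mulL2 (memLp_top_ev hw) u ∈ Hardy ℂ := by
  let K : Submodule ℂ (H2 ℂ) :=
    (Hardy ℂ).comap ((mulL2 (memLp_top_ev hw)).comp (Hardy ℂ).subtypeL).toLinearMap
  have hK : IsClosed (K : Set (H2 ℂ)) :=
    (isClosed_Hardy ℂ).preimage ((mulL2 (memLp_top_ev hw)).comp (Hardy ℂ).subtypeL).continuous
  have hspan : span ℂ (Set.range hardyBasis) ≤ K := by
    rw [span_le]
    rintro _ ⟨m, rfl⟩
    change mulL2 (memLp_top_ev hw) (hardyBasis m) ∈ Hardy ℂ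
    rw [hardyBasis_apply, mulL2_hardyMonomial hw]
    exact ((S ℂ ^ m) w).2
  have := topologicalClosure_minimal _ hspan hK
  rw [hardyBasis.dense_span] at this
  exact this (mem_top (x := u))

def mulH2 : H2 ℂ →L[ℂ] H2 ℂ :=
  ((mulL2 (memLp_top_ev hw)).comp (Hardy ℂ).subtypeL).codRestrict (Hardy ℂ)
    (mulL2_mem_Hardy hw)

lemma ev_mulH2 (u : H2 ℂ) : ev (mulH2 hw u) =ᵐ[μT] fun z => ev w z * ev u z :=
  coeFn_mulL2 (memLp_top_ev hw) (u : L2 ℂ)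

lemma mulH2_hardyMonomial (m : ℕ) : mulH2 hw (hardyMonomial m) = (S ℂ ^ m) w :=
  Subtype.ext (mulL2_hardyMonomial hw m)

lemma norm_mulH2_le : ‖mulH2 hw‖ ≤ 1 :=
  ContinuousLinearMap.opNorm_le_bound _ zero_le_one fun u =>
    (norm_mulL2_apply_le (memLp_top_ev hw) hw u).trans_eq (one_mul _).symm

lemma mulSet_eq_range : mulSet w = (mulH2 hw).range := by
  ext u
  constructor
  · rintro ⟨k, hk⟩
    refine ⟨k, H2_ext ?_⟩
    filter_upwards [ev_mulH2 hw k, hk] with z hmul hu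
    exact hmul.trans hu.symm
  · rintro ⟨k, rfl⟩
    exact ⟨k, ev_mulH2 hw k⟩

end Multiplier

section InnerFunctions

open ContinuousLinearMap

def IsInnerOrZero (w : H2 ℂ) : Prop := w = 0 ∨ IsInnerFn w

lemma IsInnerOrZero.norm_ev_le_one {w : H2 ℂ} (hw : IsInnerOrZero w) :
    ∀ᵐ z ∂μT, ‖ev w z‖ ≤ 1 := by
  rcases hw with rfl | hw
  · filter_upwards [ev_zero] with z hz
    simp [hz]
  · filter_upwards [hw] with z hz
    exact hz.le

lemma IsInnerOrZero.mulH2_comp_adjoint_comp {w : H2 ℂ} (hw : IsInnerOrZero w) :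
    mulH2 hw.norm_ev_le_one ∘L (mulH2 hw.norm_ev_le_one)† ∘L mulH2 hw.norm_ev_le_one =
      mulH2 hw.norm_ev_le_one := by
  rcases id hw with rfl | hinner
  · have : mulH2 hw.norm_ev_le_one = 0 := by
      ext1 u
      refine H2_ext ?_
      filter_upwards [ev_mulH2 hw.norm_ev_le_one u, ev_zero] with z hmul h0
      rw [hmul, h0, zero_mul, zero_apply, h0]
    simp [this]
  · have hisom : (mulH2 hw.norm_ev_le_one)† ∘L mulH2 hw.norm_ev_le_one = 1 :=
      (norm_map_iff_adjoint_comp_self _).mp fun u =>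
        norm_mulL2_apply (memLp_top_ev hw.norm_ev_le_one) hinner u
    rw [hisom, one_def, comp_id]

lemma isClosed_mulSet {w : H2 ℂ} (hw : IsInnerOrZero w) : IsClosed (mulSet w : Set (H2 ℂ)) := by
  rw [mulSet_eq_range hw.norm_ev_le_one]
  exact isClosed_range_of_comp_adjoint_comp hw.mulH2_comp_adjoint_comp

lemma inner_projTo_mulSet {w : H2 ℂ} (hw : IsInnerOrZero w) (x y : H2 ℂ) :
    ⟪projTo (mulSet w) x, y⟫_ℂ =
      ⟪(mulH2 hw.norm_ev_le_one†) x, (mulH2 hw.norm_ev_le_one†) y⟫_ℂ := by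
  rw [mulSet_eq_range hw.norm_ev_le_one,
    projTo_range_of_comp_adjoint_comp hw.mulH2_comp_adjoint_comp, ← adjoint_inner_right]

end InnerFunctions

section MeasurableFamilies

open ContinuousLinearMap

lemma stronglyMeasurable_adjoint_mulH2_apply {α : Type*} [MeasurableSpace α] {ψ : α → H2 ℂ}
    (hψ : StronglyMeasurable ψ) (hψ1 : ∀ t, ∀ᵐ z ∂μT, ‖ev (ψ t) z‖ ≤ 1) {v : α → H2 ℂ}
    (hv : StronglyMeasurable v) :
    StronglyMeasurable fun t => (mulH2 (hψ1 t)†) (v t) := by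
  refine hardyBasis.stronglyMeasurable_of_measurable_inner fun m => ?_
  simp_rw [adjoint_inner_right, hardyBasis_apply, mulH2_hardyMonomial]
  exact (((S ℂ ^ m).continuous.comp_stronglyMeasurable hψ).inner hv).measurable

lemma isMeasRange_mulSet {ψ : 𝕋 → H2 ℂ} (hψ : StronglyMeasurable ψ)
    (hψ1 : ∀ t, IsInnerOrZero (ψ t)) : IsMeasRange fun t => mulSet (ψ t) := by
  refine ⟨fun t => isClosed_mulSet (hψ1 t), fun x y => ?_⟩
  simp_rw [inner_projTo_mulSet (hψ1 _)]
  exact ((stronglyMeasurable_adjoint_mulH2_apply hψ _ stronglyMeasurable_const).inner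
    (stronglyMeasurable_adjoint_mulH2_apply hψ _ stronglyMeasurable_const)).measurable

lemma timesSet_subset_rangeSet {φ : L2 (H2 ℂ)} {ψ : 𝕋 → H2 ℂ}
    (hφψ : (φ : 𝕋 → H2 ℂ) =ᵐ[μT] ψ) : timesSet φ ⊆ rangeSet fun t => mulSet (ψ t) := by
  rintro h ⟨g, hg⟩
  filter_upwards [hg, hφψ] with t hgt hφt
  refine ⟨(g : 𝕋 → H2 ℂ) t, ?_⟩
  filter_upwards [hgt] with z hz
  rwa [ev2, ev2, ev2, hφt] at hz

lemma rangeSet_subset_timesSet {φ : L2 (H2 ℂ)} {ψ : 𝕋 → H2 ℂ} (hψ : StronglyMeasurable ψ)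
    (hψ1 : ∀ t, IsInnerOrZero (ψ t)) (hφψ : (φ : 𝕋 → H2 ℂ) =ᵐ[μT] ψ) :
    rangeSet (fun t => mulSet (ψ t)) ⊆ timesSet φ := by
  intro h hh
  set A : 𝕋 → H2 ℂ →L[ℂ] H2 ℂ := fun t => mulH2 (hψ1 t).norm_ev_le_one
  obtain ⟨v, hv, hhv⟩ := Lp.aestronglyMeasurable h
  set g : 𝕋 → H2 ℂ := fun t => (A t†) (v t)
  have hg : MemLp g 2 μT := by
    refine (Lp.memLp h).of_le
      (stronglyMeasurable_adjoint_mulH2_apply hψ _ hv).aestronglyMeasurable ?_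
    filter_upwards [hhv] with t ht
    calc ‖g t‖ ≤ ‖A t†‖ * ‖v t‖ := le_opNorm _ _
      _ ≤ 1 * ‖v t‖ := by
          gcongr
          rw [LinearIsometryEquiv.norm_map]
          exact norm_mulH2_le _
      _ = ‖(h : 𝕋 → H2 ℂ) t‖ := by rw [one_mul, ht]
  refine ⟨hg.toLp g, ?_⟩
  filter_upwards [hh, hφψ, hhv, hg.coeFn_toLp] with t hht hφt hvt hgt
  rw [mulSet_eq_range (hψ1 t).norm_ev_le_one, hvt] at hht
  have hA : A t (g t) = v t :=
    apply_adjoint_apply_of_mem_range (hψ1 t).mulH2_comp_adjoint_comp hht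
  filter_upwards [ev_mulH2 (hψ1 t).norm_ev_le_one (g t)] with z hz
  rw [ev2, ev2, ev2, hφt, hgt, hvt, ← hA]
  exact hz

end MeasurableFamilies

theorem statement17 (φ : L2 (H2 ℂ))
    (hin : ∀ᵐ t ∂μT, (φ : 𝕋 → H2 ℂ) t ≠ 0 → IsInnerFn ((φ : 𝕋 → H2 ℂ) t)) :
    ∃ M : Submodule ℂ (L2 (H2 ℂ)),
      (M : Set (L2 (H2 ℂ))) = timesSet φ ∧ IsClosed ((M : Set (L2 (H2 ℂ)))) ∧
      Reducing (F := L2 (H2 ℂ)) (mulF 1) M ∧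
      ∃ J : 𝕋 → Submodule ℂ (H2 ℂ), IsMeasRange J ∧ (M : Set (L2 (H2 ℂ))) = rangeSet J ∧
        ∀ᵐ t ∂μT, J t = mulSet ((φ : 𝕋 → H2 ℂ) t) := by
  obtain ⟨ψ, hψ, hφψ, hψ1⟩ := (Lp.aestronglyMeasurable φ).exists_stronglyMeasurable_forall
    (p := IsInnerOrZero) (Or.inl rfl)
    (by filter_upwards [hin] with t ht; exact or_iff_not_imp_left.mpr ht)
  set J : 𝕋 → Submodule ℂ (H2 ℂ) := fun t => mulSet (ψ t)
  have hM : rangeSet J = timesSet φ :=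
    (rangeSet_subset_timesSet hψ hψ1 hφψ).antisymm (timesSet_subset_rangeSet hφψ)
  refine ⟨rangeSubmodule J, hM, isClosed_rangeSet fun t => isClosed_mulSet (hψ1 t),
    reducing_rangeSubmodule J, J, isMeasRange_mulSet hψ hψ1, rfl, ?_⟩
  filter_upwards [hφψ] with t ht
  rw [ht]

end ShiftPaper
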